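/- Let ρ be a density matrix on ℂ^d and let Φ be a quantum channel on ℂ^d with Kraus operators {K_i}. Then I_ρ(Φ) ≤ Q_ρ(Φ) ≤ 2·V_ρ(Φ) − I_ρ(Φ). -/

import Mathlib

/-!
Since `V² − (V − I)² = I (2V − I)`, the quantity `Q` is the geometric mean of `I` and `2V − I`,
so both inequalities reduce to `0 ≤ I ≤ V`, which we prove Kraus operator by Kraus operator.
Expanding the commutator with `s = √ρ` gives
`‖[s, K]‖_F² = tr((K†K + KK†) ρ) − 2 Re tr(s K† s K)`, so `I_ρ(K) ≤ V_ρ(K)` amounts to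
`|tr(Kρ)|² ≤ Re tr(s K† s K)`. This is Cauchy–Schwarz for the Frobenius inner product of
`t K t` and `s`, where `t = √s`: indeed `tr(t K t s) = tr(Kρ)`, `‖t K t‖_F² = tr(s K† s K)` and
`‖s‖_F² = tr ρ = 1`.
-/

open Matrix
open scoped ComplexOrder

noncomputable section

def Matrix.PosSemidef.sqrt {m : Type*} [Fintype m] [DecidableEq m] {A : Matrix m m ℂ}
    (hA : A.PosSemidef) : Matrix m m ℂ :=
  (hA.1.eigenvectorUnitary : Matrix m m ℂ) *
    diagonal (fun i => ((Real.sqrt (hA.1.eigenvalues i) : ℝ) : ℂ)) *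
    (star hA.1.eigenvectorUnitary : Matrix m m ℂ)

/-- Variance of an operator `K` with respect to a state `ρ`:
`V_ρ(K) = ½ tr((K†K + KK†)ρ) − |tr(Kρ)|²`. -/
def opVar {d : ℕ} (ρ K : Matrix (Fin d) (Fin d) ℂ) : ℝ :=
  (((Kᴴ * K + K * Kᴴ) * ρ).trace).re / 2 - ‖(K * ρ).trace‖ ^ 2

/-- Variance of a channel with Kraus operators `K i`: `V_ρ(Φ) = Σ_i V_ρ(K_i)`. -/
def chanVar {d n : ℕ} (ρ : Matrix (Fin d) (Fin d) ℂ)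
    (K : Fin n → Matrix (Fin d) (Fin d) ℂ) : ℝ :=
  ∑ i, opVar ρ (K i)

/-- Wigner–Yanase skew information of a channel with Kraus operators `K i`:
`I_ρ(Φ) = ½ Σ_i ‖[√ρ, K_i]‖_F²`, where `√ρ` is the PSD square root of `ρ`. -/
def chanSkew {d n : ℕ} (ρ : Matrix (Fin d) (Fin d) ℂ) (hρ : ρ.PosSemidef)
    (K : Fin n → Matrix (Fin d) (Fin d) ℂ) : ℝ :=
  (1 / 2) * ∑ i,
    (((hρ.sqrt * K i - K i * hρ.sqrt)ᴴ * (hρ.sqrt * K i - K i * hρ.sqrt)).trace).re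

/-- Quantum uncertainty of a channel:
`Q_ρ(Φ) = √(V_ρ(Φ)² − (V_ρ(Φ) − I_ρ(Φ))²)`. -/
def chanQ {d n : ℕ} (ρ : Matrix (Fin d) (Fin d) ℂ) (hρ : ρ.PosSemidef)
    (K : Fin n → Matrix (Fin d) (Fin d) ℂ) : ℝ :=
  Real.sqrt ((chanVar ρ K) ^ 2 - (chanVar ρ K - chanSkew ρ hρ K) ^ 2)

namespace Matrix

variable {m : Type*} [Fintype m]

theorem norm_trace_conjTranspose_mul_sq_le {n 𝕜 : Type*} [Fintype n] [RCLike 𝕜]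
    (A B : Matrix m n 𝕜) :
    ‖(Aᴴ * B).trace‖ ^ 2 ≤ RCLike.re (Aᴴ * A).trace * RCLike.re (Bᴴ * B).trace := by
  have h_inner (X Y : Matrix m n 𝕜) :
      (Xᴴ * Y).trace = inner 𝕜 (WithLp.toLp 2 X.vec) (WithLp.toLp 2 Y.vec) := by
    rw [← star_vec_dotProduct_vec, EuclideanSpace.inner_toLp_toLp, dotProduct_comm]
  simpa only [h_inner, norm_inner_symm, ← sq] using inner_mul_inner_self_le (𝕜 := 𝕜)
    (WithLp.toLp 2 A.vec) (WithLp.toLp 2 B.vec)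

variable [DecidableEq m]

theorem PosSemidef.sqrt_mul_self {A : Matrix m m ℂ} (hA : A.PosSemidef) :
    hA.sqrt * hA.sqrt = A := by
  conv_rhs => rw [hA.1.spectral_theorem]
  have hU : (star hA.1.eigenvectorUnitary : Matrix m m ℂ) * hA.1.eigenvectorUnitary = 1 :=
    Unitary.star_mul_self_of_mem hA.1.eigenvectorUnitary.2
  simp only [PosSemidef.sqrt, Unitary.conjStarAlgAut_apply]
  rw [show ∀ a b c d e f : Matrix m m ℂ, a * b * c * (d * e * f) = a * (b * (c * d) * e) * f by
    intros; simp only [Matrix.mul_assoc], hU, Matrix.mul_one, diagonal_mul_diagonal]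
  refine congrArg (fun D => _ * D * _) (congrArg diagonal (funext fun i => ?_))
  rw [← Complex.ofReal_mul, Real.mul_self_sqrt (hA.eigenvalues_nonneg i)]
  rfl

theorem PosSemidef.posSemidef_sqrt {A : Matrix m m ℂ} (hA : A.PosSemidef) :
    hA.sqrt.PosSemidef := by
  have hD : (diagonal fun i => ((Real.sqrt (hA.1.eigenvalues i) : ℝ) : ℂ)).PosSemidef :=
    PosSemidef.diagonal fun _ => Complex.zero_le_real.mpr (Real.sqrt_nonneg _)
  simpa [PosSemidef.sqrt, star_eq_conjTranspose] using
    hD.mul_mul_conjTranspose_same (hA.1.eigenvectorUnitary : Matrix m m ℂ)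

theorem trace_commutator_conjTranspose_mul_self {R : Type*} [CommRing R] [StarRing R]
    {s : Matrix m m R} (hs : s.IsHermitian) (K : Matrix m m R) :
    ((s * K - K * s)ᴴ * (s * K - K * s)).trace =
      ((Kᴴ * K + K * Kᴴ) * (s * s)).trace - 2 * (s * Kᴴ * s * K).trace := by
  have h_adj : (s * K - K * s)ᴴ = Kᴴ * s - s * Kᴴ := by
    simp only [conjTranspose_sub, conjTranspose_mul, hs.eq]
  have h_outer : (Kᴴ * s * s * K).trace = (K * Kᴴ * (s * s)).trace := by
    rw [trace_mul_comm]; simp only [Matrix.mul_assoc]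
  have h_inner : (s * Kᴴ * K * s).trace = (Kᴴ * K * (s * s)).trace := by
    rw [Matrix.mul_assoc, Matrix.mul_assoc, trace_mul_comm]; simp only [Matrix.mul_assoc]
  have h_cross : (Kᴴ * s * K * s).trace = (s * Kᴴ * s * K).trace := by
    rw [trace_mul_comm]; simp only [Matrix.mul_assoc]
  rw [h_adj, show (Kᴴ * s - s * Kᴴ) * (s * K - K * s) =
      Kᴴ * s * s * K - Kᴴ * s * K * s - s * Kᴴ * s * K + s * Kᴴ * K * s by noncomm_ring]
  simp only [trace_add, trace_sub, add_mul, h_outer, h_inner, h_cross]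
  ring

theorem PosSemidef.norm_trace_mul_sq_le {ρ : Matrix m m ℂ} (hρ : ρ.PosSemidef)
    (K : Matrix m m ℂ) :
    ‖(K * ρ).trace‖ ^ 2 ≤ (hρ.sqrt * Kᴴ * hρ.sqrt * K).trace.re * ρ.trace.re := by
  set s := hρ.sqrt
  have hs : s.PosSemidef := hρ.posSemidef_sqrt
  set t := hs.sqrt
  have htt : t * t = s := hs.sqrt_mul_self
  have hss : s * s = ρ := hρ.sqrt_mul_self
  have ht : tᴴ = t := hs.posSemidef_sqrt.1
  have h_adj : (t * Kᴴ * t)ᴴ = t * K * t := by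
    simp only [conjTranspose_mul, conjTranspose_conjTranspose, ht, Matrix.mul_assoc]
  have h_left : (t * K * t * s).trace = (K * ρ).trace := by
    rw [Matrix.mul_assoc, Matrix.mul_assoc, trace_mul_comm, ← hss, ← htt]
    simp only [Matrix.mul_assoc]
  have h_mid : (t * K * t * (t * Kᴴ * t)).trace = (s * Kᴴ * s * K).trace := by
    rw [show t * K * t * (t * Kᴴ * t) = t * (K * (t * t) * Kᴴ * t) by noncomm_ring,
      trace_mul_comm, htt, show K * s * Kᴴ * t * t = K * (s * Kᴴ * (t * t)) by noncomm_ring,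
      htt, trace_mul_comm, Matrix.mul_assoc]
  simpa only [h_adj, h_left, h_mid, hs.1.eq, hss, RCLike.re_to_complex] using
    norm_trace_conjTranspose_mul_sq_le (t * Kᴴ * t) s

end Matrix

theorem Real.le_sqrt_mul_and_sqrt_mul_le {a b : ℝ} (ha : 0 ≤ a) (hab : a ≤ b) :
    a ≤ √(a * b) ∧ √(a * b) ≤ b := by
  constructor
  · calc a = √(a * a) := (Real.sqrt_mul_self ha).symm
      _ ≤ √(a * b) := Real.sqrt_le_sqrt (mul_le_mul_of_nonneg_left hab ha)
  · calc √(a * b) ≤ √(b * b) := Real.sqrt_le_sqrt (mul_le_mul_of_nonneg_right hab (ha.trans hab))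
      _ = b := Real.sqrt_mul_self (ha.trans hab)

/-- Skew information of a single Kraus operator, `I_ρ(K) = ½ ‖[√ρ, K]‖_F²`. -/
def opSkew {d : ℕ} (ρ : Matrix (Fin d) (Fin d) ℂ) (hρ : ρ.PosSemidef)
    (K : Matrix (Fin d) (Fin d) ℂ) : ℝ :=
  (1 / 2) * (((hρ.sqrt * K - K * hρ.sqrt)ᴴ * (hρ.sqrt * K - K * hρ.sqrt)).trace).re

section Channel

variable {d n : ℕ} {ρ : Matrix (Fin d) (Fin d) ℂ} (hρ : ρ.PosSemidef)

theorem chanSkew_eq_sum_opSkew (K : Fin n → Matrix (Fin d) (Fin d) ℂ) :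
    chanSkew ρ hρ K = ∑ i, opSkew ρ hρ (K i) :=
  Finset.mul_sum _ _ _

theorem opSkew_nonneg (K : Matrix (Fin d) (Fin d) ℂ) : 0 ≤ opSkew ρ hρ K :=
  mul_nonneg (by norm_num) (Complex.nonneg_iff.mp
    (posSemidef_conjTranspose_mul_self (hρ.sqrt * K - K * hρ.sqrt)).trace_nonneg).1

theorem opSkew_le_opVar (htr : ρ.trace = 1) (K : Matrix (Fin d) (Fin d) ℂ) :
    opSkew ρ hρ K ≤ opVar ρ K := by
  have h_cs := hρ.norm_trace_mul_sq_le K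
  rw [htr, Complex.one_re, mul_one] at h_cs
  rw [opSkew, opVar, trace_commutator_conjTranspose_mul_self hρ.posSemidef_sqrt.1,
    hρ.sqrt_mul_self, Complex.sub_re, Complex.mul_re, Complex.re_ofNat, Complex.im_ofNat]
  linarith

theorem chanSkew_nonneg (K : Fin n → Matrix (Fin d) (Fin d) ℂ) : 0 ≤ chanSkew ρ hρ K := by
  rw [chanSkew_eq_sum_opSkew]
  exact Finset.sum_nonneg fun i _ => opSkew_nonneg hρ (K i)

theorem chanSkew_le_chanVar (htr : ρ.trace = 1) (K : Fin n → Matrix (Fin d) (Fin d) ℂ) :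
    chanSkew ρ hρ K ≤ chanVar ρ K := by
  rw [chanSkew_eq_sum_opSkew]
  exact Finset.sum_le_sum fun i _ => opSkew_le_opVar hρ htr (K i)

theorem chanQ_eq_sqrt (K : Fin n → Matrix (Fin d) (Fin d) ℂ) :
    chanQ ρ hρ K = √(chanSkew ρ hρ K * (2 * chanVar ρ K - chanSkew ρ hρ K)) := by
  rw [chanQ]
  ring_nf

end Channel

theorem stmt_7_general {d n : ℕ}
    (ρ : Matrix (Fin d) (Fin d) ℂ) (hρ : ρ.PosSemidef) (htr : ρ.trace = 1)
    (K : Fin n → Matrix (Fin d) (Fin d) ℂ) :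
    chanSkew ρ hρ K ≤ chanQ ρ hρ K ∧
      chanQ ρ hρ K ≤ 2 * chanVar ρ K - chanSkew ρ hρ K := by
  rw [chanQ_eq_sqrt]
  exact Real.le_sqrt_mul_and_sqrt_mul_le (chanSkew_nonneg hρ K)
    (by linarith [chanSkew_le_chanVar hρ htr K])

/-- `I_ρ(Φ) ≤ Q_ρ(Φ) ≤ 2 V_ρ(Φ) − I_ρ(Φ)`. -/
theorem stmt_7 {d n : ℕ}
    (ρ : Matrix (Fin d) (Fin d) ℂ) (hρ : ρ.PosSemidef) (htr : ρ.trace = 1)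
    (K : Fin n → Matrix (Fin d) (Fin d) ℂ) (hK : ∑ i, (K i)ᴴ * K i = 1) :
    chanSkew ρ hρ K ≤ chanQ ρ hρ K ∧
      chanQ ρ hρ K ≤ 2 * chanVar ρ K - chanSkew ρ hρ K :=
  stmt_7_general ρ hρ htr K
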